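/- On the integer lattice ℤⁿ, for Z(x) := −K log(|x|² + 2) with K > 0, there exists a constant c > 0 (independent of K) such that ΔZ(x) ≥ −cK|x|^{−2} for all x ∈ ℤⁿ with |x| ≥ 1. -/

import Mathlib

open scoped Classical

/-- Adjacency in the integer lattice `ℤⁿ`: `y` differs from `x` in exactly one
coordinate, by `±1`. -/
def latAdj {n : ℕ} (x y : Fin n → ℤ) : Prop :=
  ∃ k, (y k = x k + 1 ∨ y k = x k - 1) ∧ ∀ i, i ≠ k → y i = x i

/-- The standard edge weight on `ℤⁿ`: `1` on edges, `0` otherwise. -/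
noncomputable def latw {n : ℕ} (x y : Fin n → ℤ) : ℝ := if latAdj x y then 1 else 0

/-- `|x|²`, the squared euclidean norm of a lattice point. -/
noncomputable def nsq {n : ℕ} (x : Fin n → ℤ) : ℝ := ∑ k, ((x k : ℝ))^2

/-- `|x|`, the euclidean norm of a lattice point. -/
noncomputable def nrm {n : ℕ} (x : Fin n → ℤ) : ℝ := Real.sqrt (nsq x)

/-- The graph Laplacian on `ℤⁿ` with node measure `μ ≡ 2n`:
`Δf(x) = (1/2n) Σ_{y∼x} (f(y) - f(x))`. -/
noncomputable def latLap {n : ℕ} (f : (Fin n → ℤ) → ℝ) (x : Fin n → ℤ) : ℝ :=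
  (1 / (2 * (n : ℝ))) * ∑' y, latw x y * (f y - f x)

noncomputable def nbr {n : ℕ} (x : Fin n → ℤ) (p : Fin n × Bool) : Fin n → ℤ :=
  Function.update x p.1 (x p.1 + if p.2 then 1 else -1)

lemma nbr_inj {n : ℕ} (x : Fin n → ℤ) : Function.Injective (nbr x) := by
  rintro ⟨k, b⟩ ⟨l, c⟩ h
  simp only [nbr] at h
  have hkl : k = l := by
    by_contra hkl
    have h1 := congrFun h k
    have h2 := congrFun h l
    rw [Function.update_self, Function.update_of_ne hkl] at h1
    rw [Function.update_of_ne (Ne.symm hkl), Function.update_self] at h2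
    cases b <;> cases c <;> omega
  subst hkl
  have h1 := congrFun h k
  rw [Function.update_self, Function.update_self] at h1
  cases b <;> cases c <;> simp_all <;> omega

lemma nbr_adj {n : ℕ} (x : Fin n → ℤ) (p : Fin n × Bool) : latAdj x (nbr x p) := by
  refine ⟨p.1, ?_, fun i hi => Function.update_of_ne hi _ _⟩
  rw [nbr, Function.update_self]
  rcases p with ⟨k, b⟩
  cases b
  · exact Or.inr (show x k + -1 = x k - 1 by omega)
  · exact Or.inl rfl

lemma adj_mem {n : ℕ} (x y : Fin n → ℤ) (h : latAdj x y) :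
    y ∈ Finset.image (nbr x) Finset.univ := by
  obtain ⟨k, hk, ho⟩ := h
  rw [Finset.mem_image]
  rcases hk with hk | hk
  · exact ⟨(k, true), Finset.mem_univ _, by
      funext i; rcases eq_or_ne i k with rfl | hi
      · simp [nbr, hk]
      · simp [nbr, Function.update_of_ne hi, ho i hi]⟩
  · exact ⟨(k, false), Finset.mem_univ _, by
      funext i; rcases eq_or_ne i k with rfl | hi
      · simp [nbr, hk]; omega
      · simp [nbr, Function.update_of_ne hi, ho i hi]⟩

lemma nsq_nbr {n : ℕ} (x : Fin n → ℤ) (p : Fin n × Bool) :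
    nsq (nbr x p) = nsq x + 2 * (if p.2 then 1 else -1) * (x p.1 : ℝ) + 1 := by
  obtain ⟨k, b⟩ := p
  have key : (fun i => ((nbr x (k,b) i : ℝ))^2)
      = Function.update (fun i => ((x i:ℝ))^2) k (((x k + if b then 1 else -1 : ℤ) : ℝ)^2) := by
    funext i
    rcases eq_or_ne i k with rfl | hi
    · simp [nbr]
    · simp [nbr, Function.update_of_ne hi]
  unfold nsq
  rw [show (∑ i, ((nbr x (k,b) i : ℝ))^2) = ∑ i, Function.update (fun i => ((x i:ℝ))^2) k (((x k + if b then 1 else -1 : ℤ) : ℝ)^2) i from by rw [key]]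
  rw [Finset.sum_update_of_mem (Finset.mem_univ k), ← Finset.sum_erase_add _ _ (Finset.mem_univ k)]
  cases b <;> simp [Finset.erase_eq] <;> push_cast <;> ring

theorem pairineq (a s K : ℝ) (hK : 0 < K) (hs : 1 ≤ s) (ha : a^2 ≤ s) :
    (-K * Real.log (s + 2*a + 3) - (-K * Real.log (s+2))) +
    (-K * Real.log (s - 2*a + 3) - (-K * Real.log (s+2))) ≥ -2*K/s := by
  have h1 : (0:ℝ) < s + 2*a + 3 := by nlinarith [sq_nonneg (a+1)]
  have h2 : (0:ℝ) < s - 2*a + 3 := by nlinarith [sq_nonneg (a-1)]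
  have h3 : (0:ℝ) < s + 2 := by linarith
  have hs0 : (0:ℝ) < s := by linarith
  have hsum : Real.log (s + 2*a + 3) + Real.log (s - 2*a + 3) ≤ 2 * Real.log (s+3) := by
    rw [← Real.log_mul (ne_of_gt h1) (ne_of_gt h2), show (2:ℝ) * Real.log (s+3) = Real.log ((s+3)^2) by rw [Real.log_pow]; push_cast; ring]
    apply Real.log_le_log (by positivity)
    nlinarith [sq_nonneg a]
  have hlog : (Real.log (s+3) - Real.log (s+2)) * s ≤ 1 := by
    rw [← le_div_iff₀ hs0, ← Real.log_div (by positivity) (ne_of_gt h3)]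
    have h4 : (0:ℝ) < (s+3)/(s+2) := by positivity
    have h5 := Real.log_le_sub_one_of_pos h4
    have h6 : (s+3)/(s+2) - 1 ≤ 1/s := by
      rw [div_sub_one (ne_of_gt h3)]
      have : (s+3) - (s+2) = 1 := by ring
      rw [this]
      exact one_div_le_one_div_of_le hs0 (by linarith)
    linarith
  rw [ge_iff_le, div_le_iff₀ hs0]
  nlinarith [mul_le_mul_of_nonneg_left hlog hK.le, mul_le_mul_of_nonneg_left hsum hK.le,
    mul_le_mul_of_nonneg_right (mul_le_mul_of_nonneg_left hsum hK.le) hs0.le]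

/-- for `Z(x) = -K log(|x|² + 2)` with `K > 0`, there is `c > 0`
(independent of `K`) with `ΔZ(x) ≥ -c K |x|⁻²` for all `x ∈ ℤⁿ` with `|x| ≥ 1`. -/
theorem stmt7 {n : ℕ} (hn : 0 < n) :
    ∃ c : ℝ, 0 < c ∧ ∀ K : ℝ, 0 < K → ∀ x : Fin n → ℤ, 1 ≤ nrm x →
      latLap (fun y => -K * Real.log (nsq y + 2)) x ≥ -c * K * nrm x ^ (-2 : ℝ) := by
  refine ⟨1, one_pos, ?_⟩
  intro K hK x hx
  set F := (fun y : Fin n → ℤ => -K * Real.log (nsq y + 2)) with hF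
  have hs0 : (0:ℝ) ≤ nsq x := Finset.sum_nonneg fun i _ => sq_nonneg _
  have hs1 : (1:ℝ) ≤ nsq x := by
    have h := Real.sq_sqrt hs0
    rw [nrm] at hx
    nlinarith
  have hxk : ∀ k, ((x k:ℝ))^2 ≤ nsq x := fun k =>
    Finset.single_le_sum (f := fun i => ((x i:ℝ))^2) (fun i _ => sq_nonneg _) (Finset.mem_univ k)
  have h1 : (∑' y, latw x y * (F y - F x)) = ∑ p : Fin n × Bool, (F (nbr x p) - F x) := by
    rw [tsum_eq_sum (s := Finset.image (nbr x) Finset.univ) (f := fun y => latw x y * (F y - F x))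
      (fun y hy => by
        have hna : ¬ latAdj x y := fun h => hy (adj_mem x y h)
        simp [latw, hna])]
    rw [Finset.sum_image (fun p _ q _ h => nbr_inj x h)]
    refine Finset.sum_congr rfl fun p _ => ?_
    simp [latw, nbr_adj]
  have h2 : ∀ k : Fin n, (F (nbr x (k,true)) - F x) + (F (nbr x (k,false)) - F x)
      ≥ -2*K/(nsq x) := by
    intro k
    have e1 : nsq (nbr x (k,true)) + 2 = nsq x + 2*(x k:ℝ) + 3 := by
      rw [nsq_nbr]; norm_num; ring
    have e2 : nsq (nbr x (k,false)) + 2 = nsq x - 2*(x k:ℝ) + 3 := by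
      rw [nsq_nbr]; norm_num; ring
    have hp := pairineq (x k) (nsq x) K hK hs1 (hxk k)
    simp only [hF]
    rw [e1, e2]
    exact hp
  have h3 : ∑ p : Fin n × Bool, (F (nbr x p) - F x) ≥ (n:ℝ) * (-2*K/(nsq x)) := by
    rw [Fintype.sum_prod_type]
    have := Finset.sum_le_sum (s := (Finset.univ : Finset (Fin n)))
      (f := fun _ => -2*K/(nsq x)) (g := fun k => ∑ b : Bool, (F (nbr x (k,b)) - F x))
      (fun k _ => by rw [Fintype.sum_bool]; have := h2 k; linarith)
    calc ∑ k : Fin n, ∑ b : Bool, (F (nbr x (k,b)) - F x)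
        ≥ ∑ _k : Fin n, -2*K/(nsq x) := this
      _ = (n:ℝ) * (-2*K/(nsq x)) := by
          rw [Finset.sum_const, Finset.card_univ, Fintype.card_fin, nsmul_eq_mul]
  have hcast : (0:ℝ) < n := by exact_mod_cast hn
  have hrp : nrm x ^ (-2:ℝ) = (nsq x)⁻¹ := by
    rw [nrm, Real.rpow_neg (Real.sqrt_nonneg _),
      show ((2:ℝ)) = ((2:ℕ):ℝ) by norm_num, Real.rpow_natCast, Real.sq_sqrt hs0]
  rw [ge_iff_le, latLap, h1, hrp]
  have hs0' : (0:ℝ) < nsq x := by linarith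
  calc -1*K*(nsq x)⁻¹ = (1/(2*(n:ℝ))) * ((n:ℝ) * (-2*K/(nsq x))) := by
        field_simp
      _ ≤ (1/(2*(n:ℝ))) * ∑ p : Fin n × Bool, (F (nbr x p) - F x) := by
        apply mul_le_mul_of_nonneg_left h3 (by positivity)
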